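/- arXiv:2410.15000 — 2 statements merged into one kernel-verified Lean document; each statement's English description precedes it below -/
import Mathlib

section
/- Let G be a finite simple connected C-canonical graph of order n and diameter d with d not congruent to 1 modulo 3 and m_G(−1) = n − d − 1, and let P = v_1 v_2 ⋯ v_{d+1} be a diameter path of G. Then for any two distinct vertices x, y of G not on P, the sets N_P(x) and N_P(y) of their neighbors on P are distinct. -/
attribute [local instance] Classical.propDecidable

/-- The multiplicity of `-1` as an eigenvalue of the adjacency matrix of `G`,
i.e. the dimension over `ℝ` of the kernel of `A + I`. -/
noncomputable def multNegOne {V : Type*} [Fintype V] (G : SimpleGraph V) : ℕ :=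
  Module.finrank ℝ (LinearMap.ker (Matrix.toLin' (G.adjMatrix ℝ + 1)))

/-- The set of indices `i ∈ {1, …, d+1}` such that `x` is adjacent to the vertex `v i`
of the diameter path `v 1, v 2, …, v (d+1)`. -/
noncomputable def pathNbrs {V : Type*} (G : SimpleGraph V) (d : ℕ) (v : ℕ → V) (x : V) :
    Finset ℕ :=
  (Finset.Icc 1 (d + 1)).filter fun i => G.Adj x (v i)

/-!
Let `B = A + I`. Its kernel has dimension `n - d - 1`, so `rank B = d + 1`. The principal
submatrix of `B` on the diameter path is `A(P_{d+1}) + I`, which is nonsingular exactly when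
`d + 1 ≢ 2 (mod 3)` (a kernel vector of it is `a, -a, 0, a, -a, 0, …`, forced to vanish at the
far end). Hence the `d + 1` rows of `B` indexed by the path already carry the whole rank, so a
vector `f` with `(B f)_P = 0` has `B f = 0`. Applying this to `f = e_x - e_y`, where `x, y ∉ P`
have the same neighbours on `P`, gives equal columns `B e_x = B e_y`, i.e. `N[x] = N[y]`.
-/

open Matrix

theorem Matrix.mulVec_eq_zero_of_rank_le_rank_submatrix {K m n ι κ : Type*} [Field K]
    [Fintype n] [Fintype κ] (B : Matrix m n K) (r : ι → m) (c : κ → n)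
    (hrank : B.rank ≤ (B.submatrix r c).rank) {f : n → K} (hf : ∀ i, (B *ᵥ f) (r i) = 0) :
    B *ᵥ f = 0 := by
  set R := B.submatrix r id
  have hR : R.rank = B.rank :=
    (B.rank_submatrix_le r id).antisymm (hrank.trans (R.rank_submatrix_le id c))
  have hker : LinearMap.ker B.mulVecLin = LinearMap.ker R.mulVecLin := by
    refine Submodule.eq_of_le_of_finrank_eq (fun g hg => ?_) ?_
    · ext i
      exact congrFun (LinearMap.mem_ker.mp hg) (r i)
    · have hB := B.mulVecLin.finrank_range_add_finrank_ker
      have hR' := R.mulVecLin.finrank_range_add_finrank_ker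
      rw [Matrix.rank, Matrix.rank] at hR
      omega
  have hfR : f ∈ LinearMap.ker R.mulVecLin := LinearMap.mem_ker.mpr (funext hf)
  exact LinearMap.mem_ker.mp (hker ▸ hfR)

theorem eq_zero_of_forall_add_add_eq_zero {R : Type*} [AddCommGroup R] {k : ℕ}
    (hk : k % 3 ≠ 2) (F : ℕ → R) (h0 : F 0 = 0) (hend : F (k + 1) = 0)
    (hrec : ∀ j < k, F j + F (j + 1) + F (j + 2) = 0) : ∀ j ≤ k + 1, F j = 0 := by
  set g : ℕ → R := fun j => if j % 3 = 0 then 0 else if j % 3 = 1 then F 1 else -F 1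
  have hg : ∀ j ≤ k, F j = g j ∧ F (j + 1) = g (j + 1) := by
    intro j hj
    induction j with
    | zero => simp [g, h0]
    | succ j ih =>
      obtain ⟨h1, h2⟩ := ih (by omega)
      refine ⟨h2, ?_⟩
      have h3 : F (j + 2) = -F j - F (j + 1) := by
        have := hrec j (by omega); rw [← sub_eq_zero, ← this]; abel
      rw [h3, h1, h2]
      simp only [g]
      rcases (show j % 3 = 0 ∨ j % 3 = 1 ∨ j % 3 = 2 by omega) with h | h | h <;>
        simp [h, Nat.add_mod, show (1 + 1) % 3 = 2 from rfl]
  have hF1 : F 1 = 0 := by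
    have h := (hg k le_rfl).2
    rw [hend] at h
    simp only [g, show (k + 1) % 3 ≠ 0 by omega, if_false] at h
    split_ifs at h
    · exact h.symm
    · exact neg_eq_zero.mp h.symm
  intro j hj
  rcases Nat.eq_zero_or_pos j with rfl | hpos
  · exact h0
  · obtain ⟨i, rfl⟩ : ∃ i, j = i + 1 := ⟨j - 1, by omega⟩
    rw [(hg i (by omega)).2]
    simp [g, hF1]

namespace SimpleGraph

theorem pathGraph_adjMatrix_add_one_mulVec_apply {R : Type*} [NonAssocRing R] {k : ℕ}
    (c : Fin k → R) (j : Fin k) :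
    (((pathGraph k).adjMatrix R + 1) *ᵥ c) j =
      ∑ i : Fin k, ((if (i : ℕ) + 1 = j then c i else 0)
        + (if (i : ℕ) + 1 = j + 1 then c i else 0)
        + (if (i : ℕ) + 1 = j + 2 then c i else 0)) := by
  rw [mulVec, dotProduct]
  refine Finset.sum_congr rfl fun i _ => ?_
  simp only [Matrix.add_apply, adjMatrix_apply, pathGraph_adj, one_apply, Fin.ext_iff]
  split_ifs <;> first | omega | simp

theorem pathGraph_adjMatrix_add_one_mulVec_injective {R : Type*} [CommRing R] {k : ℕ}
    (hk : k % 3 ≠ 2) : Function.Injective ((pathGraph k).adjMatrix R + 1).mulVecLin := by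
  rw [← LinearMap.ker_eq_bot, LinearMap.ker_eq_bot']
  intro c hc
  set F : ℕ → R := fun t => ∑ i : Fin k, if (i : ℕ) + 1 = t then c i else 0
  have hF : ∀ j ≤ k + 1, F j = 0 := by
    refine eq_zero_of_forall_add_add_eq_zero hk F (by simp [F]) ?_ fun j hj => ?_
    · exact Finset.sum_eq_zero fun i _ => if_neg (by omega)
    · have := congrFun hc ⟨j, hj⟩
      rwa [mulVecLin_apply, pathGraph_adjMatrix_add_one_mulVec_apply,
        Finset.sum_add_distrib, Finset.sum_add_distrib] at this
  funext i
  have hFi : F (i + 1) = c i :=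
    (Finset.sum_eq_single i (fun i' _ h => if_neg (by omega)) (by simp)).trans (if_pos rfl)
  exact hFi ▸ hF (i + 1) (by omega)

theorem rank_pathGraph_adjMatrix_add_one {K : Type*} [Field K] {k : ℕ} (hk : k % 3 ≠ 2) :
    ((pathGraph k).adjMatrix K + 1).rank = k := by
  rw [Matrix.rank,
    LinearMap.finrank_range_of_inj (pathGraph_adjMatrix_add_one_mulVec_injective hk),
    Module.finrank_fin_fun]

variable {V : Type*} (G : SimpleGraph V)

theorem Embedding.submatrix_adjMatrix_add_one {W R : Type*} [AddMonoidWithOne R]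
    [DecidableEq V] [DecidableEq W] [DecidableRel G.Adj] {H : SimpleGraph W} [DecidableRel H.Adj]
    (f : H ↪g G) : (G.adjMatrix R + 1).submatrix f f = H.adjMatrix R + 1 := by
  rw [← f.submatrix_adjMatrix R, ← submatrix_one (α := R) f f.injective]
  rfl

theorem adjMatrix_add_one_apply {R : Type*} [AddMonoidWithOne R] [DecidableEq V]
    [DecidableRel G.Adj] (z x : V) :
    (G.adjMatrix R + 1) z x = if z = x ∨ G.Adj x z then 1 else 0 := by
  by_cases h : z = x
  · simp [h]
  · simp [h, one_apply_ne h, G.adj_comm]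

theorem rank_adjMatrix_add_one_add_multNegOne [Fintype V] :
    (G.adjMatrix ℝ + 1).rank + multNegOne G = Fintype.card V := by
  rw [Matrix.rank, multNegOne, Matrix.toLin'_apply', LinearMap.finrank_range_add_finrank_ker,
    Module.finrank_fintype_fun_eq_card]

theorem adjMatrix_add_one_col_eq_iff {R : Type*} [AddMonoidWithOne R] [NeZero (1 : R)]
    [DecidableEq V] [DecidableRel G.Adj] {x y : V} :
    (G.adjMatrix R + 1).col x = (G.adjMatrix R + 1).col y ↔
      ∀ z, (z = x ∨ G.Adj x z) ↔ (z = y ∨ G.Adj y z) := by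
  simp only [funext_iff, col_apply, adjMatrix_add_one_apply]
  refine forall_congr' fun z => ?_
  split_ifs <;> simp_all

section GeodesicPath

variable {d : ℕ} {v : ℕ → V}
  (hpath : ∀ i ∈ Finset.Icc 1 (d + 1), ∀ j ∈ Finset.Icc 1 (d + 1),
    G.dist (v i) (v j) = max i j - min i j)

noncomputable def pathEmbedding : pathGraph (d + 1) ↪g G where
  toFun i := v (i + 1)
  inj' i j hij := by
    have := hpath (i + 1) (by simp; omega) (j + 1) (by simp; omega)
    rw [show v (i + 1) = v (j + 1) from hij, dist_self] at this
    exact Fin.ext (by omega)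
  map_rel_iff' {i j} := by
    change G.Adj (v (i + 1)) (v (j + 1)) ↔ _
    rw [← dist_eq_one_iff_adj, pathGraph_adj,
      hpath (i + 1) (by simp; omega) (j + 1) (by simp; omega)]
    omega

@[simp]
theorem pathEmbedding_apply (i : Fin (d + 1)) :
    G.pathEmbedding hpath i = v (i + 1) :=
  rfl

end GeodesicPath

theorem adj_iff_of_pathNbrs_eq {d : ℕ} {v : ℕ → V} {x y : V}
    (h : pathNbrs G d v x = pathNbrs G d v y) {i : ℕ} (hi : i ∈ Finset.Icc 1 (d + 1)) :
    G.Adj x (v i) ↔ G.Adj y (v i) := by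
  have := congrArg (i ∈ ·) h
  simpa [pathNbrs, hi] using this

end SimpleGraph

theorem stmt_6_general {V : Type*} [Fintype V] (G : SimpleGraph V) (n d : ℕ)
    (hcard : Fintype.card V = n)
    (hcanon : ∀ a b : V, (∀ z : V, (z = a ∨ G.Adj a z) ↔ (z = b ∨ G.Adj b z)) → a = b)
    (hd3 : d % 3 ≠ 1)
    (v : ℕ → V)
    (hpath : ∀ i ∈ Finset.Icc 1 (d + 1), ∀ j ∈ Finset.Icc 1 (d + 1),
      G.dist (v i) (v j) = max i j - min i j)
    (hmult : multNegOne G = n - d - 1)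
    (x y : V) (hxy : x ≠ y) (hxP : ∀ i ∈ Finset.Icc 1 (d + 1), x ≠ v i) (hyP : ∀ i ∈ Finset.Icc 1 (d + 1), y ≠ v i) :
    pathNbrs G d v x ≠ pathNbrs G d v y := by
  intro hP
  let e := G.pathEmbedding hpath
  have hn : d + 1 ≤ n := by simpa [hcard] using Fintype.card_le_of_injective e e.injective
  have hrank : (G.adjMatrix ℝ + 1).rank = d + 1 := by
    have := G.rank_adjMatrix_add_one_add_multNegOne
    omega
  set B := G.adjMatrix ℝ + 1
  have hsub : (B.submatrix e e).rank = d + 1 := by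
    rw [e.submatrix_adjMatrix_add_one]
    exact SimpleGraph.rank_pathGraph_adjMatrix_add_one (by omega)
  have hcol : B.col x = B.col y := by
    rw [← mulVec_single_one, ← mulVec_single_one, ← sub_eq_zero, ← mulVec_sub]
    refine B.mulVec_eq_zero_of_rank_le_rank_submatrix e e (hrank.trans hsub.symm).le fun i => ?_
    have hi : (i : ℕ) + 1 ∈ Finset.Icc 1 (d + 1) := by simp; omega
    simp only [mulVec_sub, mulVec_single_one, Pi.sub_apply, col_apply, B,
      G.adjMatrix_add_one_apply, e, SimpleGraph.pathEmbedding_apply, (hxP _ hi).symm,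
      (hyP _ hi).symm, false_or, G.adj_iff_of_pathNbrs_eq hP hi, sub_self]
  exact hxy (hcanon x y (G.adjMatrix_add_one_col_eq_iff.mp hcol))

theorem stmt_6 {V : Type*} [Fintype V] (G : SimpleGraph V) (n d : ℕ)
    (hconn : G.Connected)
    (hcard : Fintype.card V = n)
    (hcanon : ∀ a b : V, (∀ z : V, (z = a ∨ G.Adj a z) ↔ (z = b ∨ G.Adj b z)) → a = b)
    (hd3 : d % 3 ≠ 1)
    (hdiam : ∀ a b : V, G.dist a b ≤ d)
    (v : ℕ → V)
    (hpath : ∀ i ∈ Finset.Icc 1 (d + 1), ∀ j ∈ Finset.Icc 1 (d + 1),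
      G.dist (v i) (v j) = max i j - min i j)
    (hmult : multNegOne G = n - d - 1)
    (x y : V) (hxy : x ≠ y) (hxP : ∀ i ∈ Finset.Icc 1 (d + 1), x ≠ v i) (hyP : ∀ i ∈ Finset.Icc 1 (d + 1), y ≠ v i) :
    pathNbrs G d v x ≠ pathNbrs G d v y :=
  stmt_6_general G n d hcard hcanon hd3 v hpath hmult x y hxy hxP hyP
end

section
/- Let G be a finite simple connected C-canonical graph of order n and diameter d with d ≡ 2 (mod 3) and m_G(−1) = n − d − 1, and let P = v_1 v_2 ⋯ v_{d+1} be a diameter path of G. Then any two distinct vertices of G not on P are non-adjacent. -/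
attribute [local instance] Classical.propDecidable

/-!
Let `A` be the adjacency matrix and `P = v 1, …, v (d + 1)` the diameter path. Writing
`f_i = f (v i)` and `f_0 = f_(d+2) = 0`, a vector `f ∈ ker (A + I)` satisfies along `P` the
recurrence `f_(i-1) + f_i + f_(i+1) = -(sum of f over the off-path neighbours of v i)`. Since
`d ≡ 2 (mod 3)` the homogeneous recurrence has no nonzero solution, so `f` is determined by its
values off `P`. Hence restricting `ker (A + I)` to the `n - d - 1` off-path vertices is
injective, and by the multiplicity hypothesis bijective: every off-path `w` carries a kernel
vector that is the indicator of `w` off `P` and an explicit profile, determined by the set `S_w`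
of path neighbours of `w`, on `P`. The rows of `(A + I) f = 0` at off-path vertices become
integer identities between these profiles. They leave only `S_w = {p, p + 1}` with
`p ≢ 0 (mod 3)` (for `S_w = {p, p + 1, p + 2}` the profile is `-δ_{p+1}`, making `w` a closed
twin of `v (p + 1)`), and for adjacent off-path `x`, `y` they force `S_x = S_y`, making `x` and
`y` closed twins against C-canonicity.
-/

open Finset

def zeroOneNegOne (n : ℕ) : ℤ := ((n + 1) % 3 : ℕ) - 1

lemma zeroOneNegOne_add_add (k : ℕ) :
    zeroOneNegOne k + zeroOneNegOne (k + 1) + zeroOneNegOne (k + 2) = 0 := by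
  unfold zeroOneNegOne; omega

lemma zeroOneNegOne_sub_add_sub (i j : ℕ) :
    zeroOneNegOne (i - 1 - j) + zeroOneNegOne (i - j) + zeroOneNegOne (i + 1 - j) =
      if i = j then 1 else 0 := by
  unfold zeroOneNegOne; split_ifs <;> omega

lemma eq_mul_zeroOneNegOne_of_rec {m : ℕ} {h : ℕ → ℝ} (h0 : h 0 = 0)
    (hrow : ∀ i, 1 ≤ i → i ≤ m → h (i - 1) + h i + h (i + 1) = 0) :
    ∀ k ≤ m + 1, h k = h 1 * zeroOneNegOne k := by
  suffices ∀ k, k ≤ m →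
      h k = h 1 * zeroOneNegOne k ∧ h (k + 1) = h 1 * zeroOneNegOne (k + 1) by
    intro k hk
    rcases Nat.eq_zero_or_pos k with rfl | hk0
    · exact (this 0 (Nat.zero_le _)).1
    · simpa [Nat.sub_add_cancel hk0] using (this (k - 1) (by omega)).2
  intro k
  induction k with
  | zero => intro; simp [h0, zeroOneNegOne]
  | succ k ih =>
    intro hk
    obtain ⟨ih₀, ih₁⟩ := ih (by omega)
    refine ⟨ih₁, ?_⟩
    have hrec := hrow (k + 1) (by omega) hk
    have hu : (zeroOneNegOne k + zeroOneNegOne (k + 1) + zeroOneNegOne (k + 2) : ℝ) = 0 := by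
      exact_mod_cast zeroOneNegOne_add_add k
    rw [Nat.add_sub_cancel] at hrec
    linear_combination hrec - ih₀ - ih₁ - h 1 * hu

-- The values on `v 1, …, v (d + 1)` of the kernel vector of `A + I` that is the indicator of an
-- off-path vertex with path-neighbour set `S` off the path. The subtraction `i - j` truncates,
-- so the `j`-th term vanishes for `i ≤ j`, as it should.
def pathProfile (S : Finset ℕ) (i : ℕ) : ℤ :=
  -(∑ j ∈ S, zeroOneNegOne (j - 1)) * zeroOneNegOne i - ∑ j ∈ S, zeroOneNegOne (i - j)

lemma pathProfile_zero (S : Finset ℕ) : pathProfile S 0 = 0 := by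
  simp [pathProfile, zeroOneNegOne]

lemma pathProfile_rec (S : Finset ℕ) {i : ℕ} (hi : 1 ≤ i) :
    pathProfile S (i - 1) + pathProfile S i + pathProfile S (i + 1) +
      (if i ∈ S then 1 else 0) = 0 := by
  have hcoef : zeroOneNegOne (i - 1) + zeroOneNegOne i + zeroOneNegOne (i + 1) = 0 := by
    unfold zeroOneNegOne; omega
  have hsum : ∑ j ∈ S, (zeroOneNegOne (i - 1 - j) + zeroOneNegOne (i - j) +
      zeroOneNegOne (i + 1 - j)) = if i ∈ S then 1 else 0 := by
    rw [sum_congr rfl fun j _ => zeroOneNegOne_sub_add_sub i j, sum_ite_eq]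
  simp only [pathProfile, sum_add_distrib] at hsum ⊢
  linear_combination (-∑ j ∈ S, zeroOneNegOne (j - 1)) * hcoef - hsum

lemma pathProfile_top {d : ℕ} (hd : d % 3 = 2) {S : Finset ℕ} (hS : S ⊆ Icc 1 (d + 1)) :
    pathProfile S (d + 2) = 0 := by
  have hterm : ∀ j ∈ S, zeroOneNegOne (d + 2 - j) = -zeroOneNegOne (j - 1) := by
    intro j hj
    have := mem_Icc.1 (hS hj)
    unfold zeroOneNegOne; omega
  have htop : zeroOneNegOne (d + 2) = 1 := by unfold zeroOneNegOne; omega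
  rw [pathProfile, sum_congr rfl hterm, htop, sum_neg_distrib]
  ring

lemma eq_mul_pathProfile_of_rec {d : ℕ} (hd : d % 3 = 2) {S : Finset ℕ}
    (hS : S ⊆ Icc 1 (d + 1)) {g : ℕ → ℝ} {c : ℝ} (h0 : g 0 = 0) (htop : g (d + 2) = 0)
    (hrow : ∀ i ∈ Icc 1 (d + 1),
      g (i - 1) + g i + g (i + 1) + c * (if i ∈ S then 1 else 0) = 0) :
    ∀ k ≤ d + 2, g k = c * pathProfile S k := by
  set h : ℕ → ℝ := fun k => g k - c * pathProfile S k
  have hhom := eq_mul_zeroOneNegOne_of_rec (m := d + 1) (h := h)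
    (by simp [h, h0, pathProfile_zero]) fun i hi1 hi2 => by
      have hprof := congrArg (fun z : ℤ => (z : ℝ)) (pathProfile_rec S hi1)
      push_cast at hprof
      linear_combination hrow i (mem_Icc.2 ⟨hi1, hi2⟩) - c * hprof
  -- `h` solves the homogeneous recurrence, and `zeroOneNegOne (d + 2) = 1`.
  have h1 : h 1 = 0 := by
    have := hhom (d + 2) le_rfl
    have htop' : zeroOneNegOne (d + 2) = 1 := by unfold zeroOneNegOne; omega
    simpa [h, htop, pathProfile_top hd hS, htop'] using this.symm
  intro k hk
  have := hhom k hk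
  rw [h1, zero_mul] at this
  linarith [show h k = g k - c * pathProfile S k from rfl]

lemma pathProfile_triple {p : ℕ} (hp : 1 ≤ p) (i : ℕ) :
    pathProfile {p, p + 1, p + 2} i = -if i = p + 1 then 1 else 0 := by
  have hcoef : ∑ j ∈ {p, p + 1, p + 2}, zeroOneNegOne (j - 1) = 0 := by
    rw [sum_insert (by simp), sum_pair (by omega)]; unfold zeroOneNegOne; omega
  rw [pathProfile, hcoef, sum_insert (by simp), sum_pair (by omega)]
  unfold zeroOneNegOne; split_ifs <;> omega

lemma pathProfile_pair_of_mod_eq_one {p : ℕ} (hp : p % 3 = 1) (i : ℕ) :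
    pathProfile {p, p + 1} i = if i ≤ p then -zeroOneNegOne i else 0 := by
  have hcoef : ∑ j ∈ {p, p + 1}, zeroOneNegOne (j - 1) = 1 := by
    rw [sum_pair (by omega)]; unfold zeroOneNegOne; omega
  rw [pathProfile, hcoef, sum_pair (by omega)]
  unfold zeroOneNegOne; split_ifs <;> omega

lemma pathProfile_pair_of_mod_eq_two {p : ℕ} (hp : p % 3 = 2) (i : ℕ) :
    pathProfile {p, p + 1} i = if p < i then zeroOneNegOne (i + 1 - p) else 0 := by
  have hcoef : ∑ j ∈ {p, p + 1}, zeroOneNegOne (j - 1) = 0 := by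
    rw [sum_pair (by omega)]; unfold zeroOneNegOne; omega
  rw [pathProfile, hcoef, sum_pair (by omega)]
  unfold zeroOneNegOne; split_ifs <;> omega

lemma eq_of_sum_pathProfile_pair {p q : ℕ} (hp : p % 3 ≠ 0) (hq : q % 3 ≠ 0)
    (h : ∑ i ∈ {q, q + 1}, pathProfile {p, p + 1} i = -1) : q = p := by
  rw [sum_pair (by omega)] at h
  rcases (by omega : p % 3 = 1 ∨ p % 3 = 2) with hp | hp
  · rw [pathProfile_pair_of_mod_eq_one hp, pathProfile_pair_of_mod_eq_one hp] at h
    unfold zeroOneNegOne at h; split_ifs at h <;> omega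
  · rw [pathProfile_pair_of_mod_eq_two hp, pathProfile_pair_of_mod_eq_two hp] at h
    unfold zeroOneNegOne at h; split_ifs at h <;> omega

lemma zeroOneNegOne_trichotomy (n : ℕ) :
    zeroOneNegOne n = -1 ∨ zeroOneNegOne n = 0 ∨ zeroOneNegOne n = 1 := by
  unfold zeroOneNegOne; omega

lemma sum_pathProfile_singleton_ne_neg_one (p : ℕ) :
    ∑ i ∈ {p}, pathProfile {p} i ≠ -1 := by
  simp only [sum_singleton, pathProfile, Nat.sub_self]
  rcases zeroOneNegOne_trichotomy (p - 1) with h | h | h <;> rw [h] <;>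
    unfold zeroOneNegOne at h ⊢ <;> omega

lemma sum_pathProfile_gap_ne_neg_one (p : ℕ) :
    ∑ i ∈ {p, p + 2}, pathProfile {p, p + 2} i ≠ -1 := by
  simp only [pathProfile, sum_pair (show p ≠ p + 2 by omega)]
  rcases zeroOneNegOne_trichotomy (p - 1) with h | h | h <;>
  rcases zeroOneNegOne_trichotomy (p + 2 - 1) with h' | h' | h' <;> rw [h, h'] <;>
    unfold zeroOneNegOne at h h' ⊢ <;> omega

lemma sum_pathProfile_pair_ne_neg_one {p : ℕ} (hp : 1 ≤ p) (h0 : p % 3 = 0) :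
    ∑ i ∈ {p, p + 1}, pathProfile {p, p + 1} i ≠ -1 := by
  have hcoef : ∑ j ∈ {p, p + 1}, zeroOneNegOne (j - 1) = -1 := by
    rw [sum_pair (by omega)]; unfold zeroOneNegOne; omega
  simp only [pathProfile, hcoef, sum_pair (show p ≠ p + 1 by omega)]
  unfold zeroOneNegOne; omega

lemma eq_pair_or_eq_triple_of_sum_pathProfile {S : Finset ℕ} (hS : ∀ i ∈ S, 1 ≤ i)
    (hspread : ∀ i ∈ S, ∀ j ∈ S, i ≤ j + 2) (h : ∑ i ∈ S, pathProfile S i = -1) :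
    (∃ p, p % 3 ≠ 0 ∧ S = {p, p + 1}) ∨ ∃ p, S = {p, p + 1, p + 2} := by
  obtain ⟨p, hpS, hmin⟩ : ∃ p ∈ S, ∀ i ∈ S, p ≤ i := by
    rcases S.eq_empty_or_nonempty with rfl | hne
    · simp at h
    · exact ⟨S.min' hne, S.min'_mem hne, fun i hi => S.min'_le i hi⟩
  have hp := hS p hpS
  have hmem : ∀ i, i ∈ S ↔
      i = p ∨ (i = p + 1 ∧ p + 1 ∈ S) ∨ (i = p + 2 ∧ p + 2 ∈ S) := by
    intro i
    constructor
    · intro hi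
      have := hmin i hi
      have := hspread i hi p hpS
      rcases (by omega : i = p ∨ i = p + 1 ∨ i = p + 2) with rfl | rfl | rfl <;> simp_all
    · rintro (rfl | ⟨rfl, hi⟩ | ⟨rfl, hi⟩) <;> assumption
  by_cases h1 : p + 1 ∈ S <;> by_cases h2 : p + 2 ∈ S
  · exact Or.inr ⟨p, by ext i; simp [hmem i, h1, h2]⟩
  · have hS' : S = {p, p + 1} := by ext i; simp [hmem i, h1, h2]
    refine Or.inl ⟨p, fun h0 => sum_pathProfile_pair_ne_neg_one hp h0 ?_, hS'⟩
    rwa [hS'] at h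
  · have hS' : S = {p, p + 2} := by ext i; simp [hmem i, h1, h2]
    exact absurd (hS' ▸ h) (sum_pathProfile_gap_ne_neg_one p)
  · have hS' : S = {p} := by ext i; simp [hmem i, h1, h2]
    exact absurd (hS' ▸ h) (sum_pathProfile_singleton_ne_neg_one p)

section Graph

variable {V : Type*} {G : SimpleGraph V} {d : ℕ} {v : ℕ → V}

def IsGeodesicSeq (G : SimpleGraph V) (d : ℕ) (v : ℕ → V) : Prop :=
  ∀ i ∈ Icc 1 (d + 1), ∀ j ∈ Icc 1 (d + 1), G.dist (v i) (v j) = max i j - min i j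

noncomputable def pathSet (d : ℕ) (v : ℕ → V) : Finset V := (Icc 1 (d + 1)).image v

def IsCCanonical (G : SimpleGraph V) : Prop :=
  ∀ a b : V, (∀ z : V, (z = a ∨ G.Adj a z) ↔ (z = b ∨ G.Adj b z)) → a = b

lemma notMem_pathSet {x : V} (h : ∀ i ∈ Icc 1 (d + 1), x ≠ v i) : x ∉ pathSet d v := by
  rintro hx
  obtain ⟨i, hi, rfl⟩ := mem_image.1 hx
  exact h i hi rfl

lemma mem_pathNbrs {x : V} {i : ℕ} :
    i ∈ pathNbrs G d v x ↔ i ∈ Icc 1 (d + 1) ∧ G.Adj x (v i) :=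
  mem_filter

lemma IsCCanonical.eq_of_adj (hG : IsCCanonical G) {a b : V} (hab : G.Adj a b)
    (h : ∀ z, z ≠ a → z ≠ b → (G.Adj a z ↔ G.Adj b z)) : a = b := by
  refine hG a b fun z => ?_
  by_cases hza : z = a
  · subst hza; simpa using Or.inr hab.symm
  by_cases hzb : z = b
  · subst hzb; simpa using Or.inr hab
  simp [hza, hzb, h z hza hzb]

-- Row `z` of `(A + I) f = 0` for the kernel vector `f` attached to the off-path vertex `w`.
def KernelRowIdentity (G : SimpleGraph V) (d : ℕ) (v : ℕ → V) : Prop :=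
  ∀ w ∉ pathSet d v, ∀ z ∉ pathSet d v,
    (if G.Adj z w then 1 else 0) + (if z = w then 1 else 0) +
      ∑ k ∈ pathNbrs G d v z, pathProfile (pathNbrs G d v w) k = (0 : ℤ)

namespace IsGeodesicSeq

lemma injOn (hv : IsGeodesicSeq G d v) : Set.InjOn v (Icc 1 (d + 1)) := by
  intro i hi j hj hij
  have := hv i hi j hj
  rw [hij, SimpleGraph.dist_self] at this
  rw [coe_Icc, Set.mem_Icc] at hi hj
  omega

lemma adj_iff (hv : IsGeodesicSeq G d v) {i j : ℕ} (hi : i ∈ Icc 1 (d + 1))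
    (hj : j ∈ Icc 1 (d + 1)) : G.Adj (v i) (v j) ↔ i = j + 1 ∨ j = i + 1 := by
  rw [← SimpleGraph.dist_eq_one_iff_adj, hv i hi j hj]
  omega

lemma card_pathSet (hv : IsGeodesicSeq G d v) : (pathSet d v).card = d + 1 := by
  rw [pathSet, card_image_of_injOn hv.injOn, Nat.card_Icc]
  omega

lemma pathNbrs_spread (hv : IsGeodesicSeq G d v) (hG : G.Connected) {x : V} {i j : ℕ}
    (hi : i ∈ pathNbrs G d v x) (hj : j ∈ pathNbrs G d v x) : i ≤ j + 2 := by
  rw [mem_pathNbrs] at hi hj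
  have htri := hG.dist_triangle (u := v i) (v := x) (w := v j)
  rw [hv i hi.1 j hj.1, SimpleGraph.dist_comm, SimpleGraph.dist_eq_one_iff_adj.2 hi.2,
    SimpleGraph.dist_eq_one_iff_adj.2 hj.2] at htri
  omega

lemma sum_pathNbrs_path_vertex (hv : IsGeodesicSeq G d v) {i : ℕ} (hi : i ∈ Icc 1 (d + 1))
    {g : ℕ → ℝ} (hg : ∀ k ∉ Icc 1 (d + 1), g k = 0) :
    ∑ k ∈ pathNbrs G d v (v i), g k = g (i - 1) + g (i + 1) := by
  have hnbrs :
      pathNbrs G d v (v i) = ({i - 1, i + 1} : Finset ℕ).filter (· ∈ Icc 1 (d + 1)) := by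
    ext k
    rw [mem_pathNbrs, mem_filter, mem_insert, mem_singleton]
    constructor
    · rintro ⟨hk, hadj⟩
      exact ⟨by have := (hv.adj_iff hi hk).1 hadj; omega, hk⟩
    · rintro ⟨hk', hk⟩
      exact ⟨hk, (hv.adj_iff hi hk).2 (by rw [mem_Icc] at hi hk; omega)⟩
  rw [hnbrs, sum_filter_of_ne fun k _ hk => by_contra fun h => hk (hg k h),
    sum_pair (by rw [mem_Icc] at hi; omega)]

end IsGeodesicSeq

namespace KernelRowIdentity

lemma sum_pathProfile_self (h : KernelRowIdentity G d v) {w : V} (hw : w ∉ pathSet d v) :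
    ∑ k ∈ pathNbrs G d v w, pathProfile (pathNbrs G d v w) k = -1 := by
  have := h w hw w hw
  simp only [SimpleGraph.irrefl, if_false, if_true] at this
  linarith

lemma adj_iff (h : KernelRowIdentity G d v) {w z : V} (hw : w ∉ pathSet d v)
    (hz : z ∉ pathSet d v) (hzw : z ≠ w) :
    G.Adj z w ↔ ∑ k ∈ pathNbrs G d v z, pathProfile (pathNbrs G d v w) k = -1 := by
  have := h w hw z hz
  rw [if_neg hzw] at this
  split_ifs at this with hadj <;> simp only [hadj, true_iff, false_iff] <;> omega

lemma pathNbrs_ne_triple (h : KernelRowIdentity G d v) (hv : IsGeodesicSeq G d v)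
    (hG : IsCCanonical G) {w : V} (hw : w ∉ pathSet d v) (p : ℕ) :
    pathNbrs G d v w ≠ {p, p + 1, p + 2} := by
  intro hS
  have hmem : ∀ i, i ∈ pathNbrs G d v w ↔ i = p ∨ i = p + 1 ∨ i = p + 2 := by simp [hS]
  have hp : 1 ≤ p := (mem_Icc.1 (mem_pathNbrs.1 ((hmem p).2 (Or.inl rfl))).1).1
  obtain ⟨hp1, hwp1⟩ := mem_pathNbrs.1 ((hmem (p + 1)).2 (by simp))
  refine hw (mem_image.2 ⟨p + 1, hp1, (hG.eq_of_adj hwp1 fun z hzw hzv => ?_).symm⟩)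
  by_cases hz : z ∈ pathSet d v
  · obtain ⟨i, hi, rfl⟩ := mem_image.1 hz
    have hip : i ≠ p + 1 := fun hip => hzv (hip ▸ rfl)
    rw [hv.adj_iff hp1 hi, ← mem_pathNbrs.trans (and_iff_right hi), hmem]
    omega
  · rw [SimpleGraph.adj_comm, h.adj_iff hw hz hzw, hS,
      sum_congr rfl fun k _ => pathProfile_triple hp k, sum_neg_distrib, sum_ite_eq',
      SimpleGraph.adj_comm, ← mem_pathNbrs.trans (and_iff_right hp1)]
    split_ifs with hk <;> simp [hk]

lemma exists_pathNbrs_eq_pair (h : KernelRowIdentity G d v) (hv : IsGeodesicSeq G d v)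
    (hconn : G.Connected) (hG : IsCCanonical G) {w : V} (hw : w ∉ pathSet d v) :
    ∃ p, p % 3 ≠ 0 ∧ pathNbrs G d v w = {p, p + 1} := by
  rcases eq_pair_or_eq_triple_of_sum_pathProfile (fun i hi => (mem_Icc.1 (mem_pathNbrs.1 hi).1).1)
    (fun i hi j hj => hv.pathNbrs_spread hconn hi hj) (h.sum_pathProfile_self hw) with
    hpair | ⟨p, hS⟩
  · exact hpair
  · exact absurd hS (h.pathNbrs_ne_triple hv hG hw p)

lemma not_adj (h : KernelRowIdentity G d v) (hv : IsGeodesicSeq G d v) (hconn : G.Connected)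
    (hG : IsCCanonical G) {x y : V} (hx : x ∉ pathSet d v) (hy : y ∉ pathSet d v)
    (hxy : x ≠ y) : ¬G.Adj x y := by
  intro hadj
  obtain ⟨p, hp, hSx⟩ := h.exists_pathNbrs_eq_pair hv hconn hG hx
  obtain ⟨q, hq, hSy⟩ := h.exists_pathNbrs_eq_pair hv hconn hG hy
  have hqp : q = p := by
    have := (h.adj_iff hx hy hxy.symm).1 hadj.symm
    rw [hSx, hSy] at this
    exact eq_of_sum_pathProfile_pair hp hq this
  have hS : pathNbrs G d v x = pathNbrs G d v y := by rw [hSx, hSy, hqp]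
  refine hxy (hG.eq_of_adj hadj fun z hzx hzy => ?_)
  by_cases hz : z ∈ pathSet d v
  · obtain ⟨i, hi, rfl⟩ := mem_image.1 hz
    simpa [mem_pathNbrs, hi] using Finset.ext_iff.1 hS i
  · rw [SimpleGraph.adj_comm, h.adj_iff hx hz hzx, hS, ← h.adj_iff hy hz hzy,
      SimpleGraph.adj_comm]

end KernelRowIdentity

section Kernel

variable [Fintype V]

lemma mem_ker_adjMatrix_add_one_iff {f : V → ℝ} :
    f ∈ LinearMap.ker (Matrix.toLin' (G.adjMatrix ℝ + 1)) ↔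
      ∀ z, f z + ∑ w ∈ G.neighborFinset z, f w = 0 := by
  simp only [LinearMap.mem_ker, Matrix.toLin'_apply, funext_iff, Matrix.add_mulVec,
    Matrix.one_mulVec, Pi.add_apply, SimpleGraph.adjMatrix_mulVec_apply, Pi.zero_apply, add_comm]

lemma sum_neighborFinset_eq_sum_pathNbrs_add (hinj : Set.InjOn v (Icc 1 (d + 1))) {w₀ : V}
    (hw₀ : w₀ ∉ pathSet d v) {f : V → ℝ} {c : ℝ}
    (hf : ∀ w ∉ pathSet d v, f w = if w = w₀ then c else 0) (z : V) :
    ∑ w ∈ G.neighborFinset z, f w =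
      ∑ k ∈ pathNbrs G d v z, f (v k) + if G.Adj z w₀ then c else 0 := by
  rw [← sum_filter_add_sum_filter_not _ (· ∈ pathSet d v)]
  congr 1
  · have himage :
        (G.neighborFinset z).filter (· ∈ pathSet d v) = (pathNbrs G d v z).image v := by
      ext w
      simp only [mem_filter, SimpleGraph.mem_neighborFinset, pathSet, mem_image, mem_pathNbrs]
      constructor
      · rintro ⟨hzw, i, hi, rfl⟩; exact ⟨i, ⟨hi, hzw⟩, rfl⟩
      · rintro ⟨i, ⟨hi, hzw⟩, rfl⟩; exact ⟨hzw, i, hi, rfl⟩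
    rw [himage, sum_image fun i hi j hj => hinj (mem_pathNbrs.1 hi).1 (mem_pathNbrs.1 hj).1]
  · rw [sum_congr rfl fun w hw => hf w (mem_filter.1 hw).2, sum_ite_eq']
    simp [hw₀]

lemma IsGeodesicSeq.eq_pathProfile_of_mem_ker (hv : IsGeodesicSeq G d v) (hd : d % 3 = 2)
    {f : V → ℝ} (hf : f ∈ LinearMap.ker (Matrix.toLin' (G.adjMatrix ℝ + 1)))
    {w₀ : V} (hw₀ : w₀ ∉ pathSet d v) {c : ℝ}
    (hoff : ∀ w ∉ pathSet d v, f w = if w = w₀ then c else 0) :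
    ∀ k ∈ Icc 1 (d + 1), f (v k) = c * pathProfile (pathNbrs G d v w₀) k := by
  set g : ℕ → ℝ := fun k => if k ∈ Icc 1 (d + 1) then f (v k) else 0
  have hg : ∀ k ∉ Icc 1 (d + 1), g k = 0 := fun k hk => if_neg hk
  have hrow : ∀ i ∈ Icc 1 (d + 1), g (i - 1) + g i + g (i + 1) +
      c * (if i ∈ pathNbrs G d v w₀ then 1 else 0) = 0 := by
    intro i hi
    have hrow := mem_ker_adjMatrix_add_one_iff.1 hf (v i)
    rw [sum_neighborFinset_eq_sum_pathNbrs_add hv.injOn hw₀ hoff,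
      sum_congr rfl fun k hk => (if_pos (mem_pathNbrs.1 hk).1).symm,
      hv.sum_pathNbrs_path_vertex hi hg] at hrow
    have hadj : G.Adj (v i) w₀ ↔ i ∈ pathNbrs G d v w₀ := by
      rw [mem_pathNbrs, SimpleGraph.adj_comm]; exact ⟨fun h => ⟨hi, h⟩, And.right⟩
    simp only [g, if_pos hi, hadj] at hrow ⊢
    split_ifs at hrow ⊢ <;> linarith
  intro k hk
  have := eq_mul_pathProfile_of_rec hd (filter_subset _ _) (hg 0 (by simp)) (hg (d + 2) (by simp))
    hrow k (by rw [mem_Icc] at hk; omega)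
  rwa [show g k = f (v k) from if_pos hk] at this

lemma IsGeodesicSeq.exists_mem_ker_eq_single_offPath {n : ℕ} (hv : IsGeodesicSeq G d v)
    (hd : d % 3 = 2) (hcard : Fintype.card V = n) (hmult : multNegOne G = n - d - 1)
    {w₀ : V} (hw₀ : w₀ ∉ pathSet d v) :
    ∃ f ∈ LinearMap.ker (Matrix.toLin' (G.adjMatrix ℝ + 1)),
      ∀ w ∉ pathSet d v, f w = if w = w₀ then 1 else 0 := by
  set K := LinearMap.ker (Matrix.toLin' (G.adjMatrix ℝ + 1))
  let restrict : K →ₗ[ℝ] ({w // w ∉ pathSet d v} → ℝ) :=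
    (LinearMap.funLeft ℝ ℝ Subtype.val).comp K.subtype
  have hinj : Function.Injective restrict := by
    rw [← LinearMap.ker_eq_bot, Submodule.eq_bot_iff]
    intro F hF
    have hoff : ∀ w ∉ pathSet d v, (F : V → ℝ) w = if w = w₀ then 0 else 0 :=
      fun w hw => (congrFun (LinearMap.mem_ker.1 hF) ⟨w, hw⟩).trans (ite_self 0).symm
    have hpath := hv.eq_pathProfile_of_mem_ker hd F.2 hw₀ hoff
    ext w
    by_cases hw : w ∈ pathSet d v
    · obtain ⟨k, hk, rfl⟩ := mem_image.1 hw
      simpa using hpath k hk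
    · simpa using hoff w hw
  have hrank : Module.finrank ℝ K = Module.finrank ℝ ({w // w ∉ pathSet d v} → ℝ) := by
    rw [Module.finrank_fintype_fun_eq_card, Fintype.card_subtype_compl, Fintype.card_coe,
      hv.card_pathSet, hcard, ← Nat.sub_sub]
    exact hmult
  obtain ⟨F, hF⟩ := (LinearMap.injective_iff_surjective_of_finrank_eq_finrank hrank).1 hinj
    fun w => if w.1 = w₀ then 1 else 0
  exact ⟨F, F.2, fun w hw => congrFun hF ⟨w, hw⟩⟩

lemma IsGeodesicSeq.kernelRowIdentity {n : ℕ} (hv : IsGeodesicSeq G d v) (hd : d % 3 = 2)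
    (hcard : Fintype.card V = n) (hmult : multNegOne G = n - d - 1) :
    KernelRowIdentity G d v := by
  intro w hw z hz
  obtain ⟨f, hf, hoff⟩ := hv.exists_mem_ker_eq_single_offPath hd hcard hmult hw
  have hrow := mem_ker_adjMatrix_add_one_iff.1 hf z
  rw [sum_neighborFinset_eq_sum_pathNbrs_add hv.injOn hw hoff, hoff z hz,
    sum_congr rfl fun k hk => hv.eq_pathProfile_of_mem_ker hd hf hw hoff k (mem_pathNbrs.1 hk).1]
    at hrow
  apply Int.cast_injective (α := ℝ)
  simp only [one_mul] at hrow
  push_cast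
  split_ifs at hrow ⊢ <;> linarith

end Kernel

end Graph

theorem stmt_9_general {V : Type*} [Fintype V] (G : SimpleGraph V) (n d : ℕ)
    (hconn : G.Connected)
    (hcard : Fintype.card V = n)
    (hcanon : ∀ a b : V, (∀ z : V, (z = a ∨ G.Adj a z) ↔ (z = b ∨ G.Adj b z)) → a = b)
    (hd3 : d % 3 = 2)
    (v : ℕ → V)
    (hpath : ∀ i ∈ Finset.Icc 1 (d + 1), ∀ j ∈ Finset.Icc 1 (d + 1),
      G.dist (v i) (v j) = max i j - min i j)
    (hmult : multNegOne G = n - d - 1)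
    (x y : V) (hxy : x ≠ y) (hxP : ∀ i ∈ Finset.Icc 1 (d + 1), x ≠ v i) (hyP : ∀ i ∈ Finset.Icc 1 (d + 1), y ≠ v i) :
    ¬ G.Adj x y :=
  (IsGeodesicSeq.kernelRowIdentity hpath hd3 hcard hmult).not_adj hpath hconn hcanon
    (notMem_pathSet hxP) (notMem_pathSet hyP) hxy

theorem stmt_9 {V : Type*} [Fintype V] (G : SimpleGraph V) (n d : ℕ)
    (hconn : G.Connected)
    (hcard : Fintype.card V = n)
    (hcanon : ∀ a b : V, (∀ z : V, (z = a ∨ G.Adj a z) ↔ (z = b ∨ G.Adj b z)) → a = b)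
    (hd3 : d % 3 = 2)
    (hdiam : ∀ a b : V, G.dist a b ≤ d)
    (v : ℕ → V)
    (hpath : ∀ i ∈ Finset.Icc 1 (d + 1), ∀ j ∈ Finset.Icc 1 (d + 1),
      G.dist (v i) (v j) = max i j - min i j)
    (hmult : multNegOne G = n - d - 1)
    (x y : V) (hxy : x ≠ y) (hxP : ∀ i ∈ Finset.Icc 1 (d + 1), x ≠ v i) (hyP : ∀ i ∈ Finset.Icc 1 (d + 1), y ≠ v i) :
    ¬ G.Adj x y :=
  stmt_9_general G n d hconn hcard hcanon hd3 v hpath hmult x y hxy hxP hyP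
end
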